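/- Let X be a hereditarily indecomposable Banach space such that no closed infinite-dimensional subspace of X is isomorphic to a proper closed infinite-dimensional subspace of itself. Fix a basic sequence (eᵢ) in X. Then the isomorphism equivalence relation on {[eᵢ]_{i∈A} : A ⊆ ℕ infinite}, viewed as a relation on 2^ℕ, has no comeager equivalence class; indeed no class is comeager in 2^ℕ. -/

import Mathlib

variable {X : Type*} [NormedAddCommGroup X] [NormedSpace ℝ X]

/-- `e` is a basic sequence: nonzero, with uniformly bounded initial projections. -/
def IsBasicSeq (e : ℕ → X) : Prop :=
  (∀ i, e i ≠ 0) ∧ ∃ K : ℝ, 1 ≤ K ∧ ∀ (a : ℕ → ℝ) (n m : ℕ), n ≤ m →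
    ‖∑ i ∈ Finset.range n, a i • e i‖ ≤ K * ‖∑ i ∈ Finset.range m, a i • e i‖

/-- The closed linear span `[e_i]_{i ∈ A}`. -/
noncomputable def closedSpan (e : ℕ → X) (A : Set ℕ) : Submodule ℝ X :=
  (Submodule.span ℝ (e '' A)).topologicalClosure

/-- Basic sequences are linearly independent. -/
lemma IsBasicSeq.linearIndependent {e : ℕ → X} (he : IsBasicSeq e) :
    LinearIndependent ℝ e := by
  obtain ⟨hne, K, hK1, hK⟩ := he
  rw [linearIndependent_iff'']
  intro s g hg0 hsum i
  set m := s.sup id + 1 with hm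
  have hsub : s ⊆ Finset.range m := by
    intro i hi
    exact Finset.mem_range.mpr (Nat.lt_succ_of_le (Finset.le_sup (f := id) hi))
  have hsum' : ∑ i ∈ Finset.range m, g i • e i = 0 := by
    rw [← hsum]
    exact (Finset.sum_subset hsub (fun i _ hi => by rw [hg0 i hi, zero_smul])).symm
  -- all partial sums vanish
  have hpart : ∀ n ≤ m, ∑ i ∈ Finset.range n, g i • e i = 0 := by
    intro n hn
    have := hK g n m hn
    rw [hsum', norm_zero, mul_zero] at this
    exact norm_eq_zero.mp (le_antisymm this (norm_nonneg _))
  have hterm : ∀ n, n < m → g n • e n = 0 := by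
    intro n hn
    have h1 := hpart (n + 1) hn
    have h2 := hpart n hn.le
    rw [Finset.sum_range_succ, h2, zero_add] at h1
    exact h1
  by_cases hi : i ∈ s
  · have := hterm i (hsub hi |> Finset.mem_range.mp)
    rcases smul_eq_zero.mp this with h | h
    · exact h
    · exact absurd h (hne i)
  · exact hg0 i hi

/-- If `0 ∉ A` then for any `x` in the span of `{e i : i ∈ A}`,
`‖e 0‖ ≤ K * ‖e 0 - x‖`. -/
lemma IsBasicSeq.norm_le {e : ℕ → X} (hne : ∀ i, e i ≠ 0) {K : ℝ} (hK1 : 1 ≤ K)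
    (hK : ∀ (a : ℕ → ℝ) (n m : ℕ), n ≤ m →
      ‖∑ i ∈ Finset.range n, a i • e i‖ ≤ K * ‖∑ i ∈ Finset.range m, a i • e i‖)
    {A : Set ℕ} (hA : 0 ∉ A) {x : X} (hx : x ∈ Submodule.span ℝ (e '' A)) :
    ‖e 0‖ ≤ K * ‖e 0 - x‖ := by
  obtain ⟨l, hl, rfl⟩ := (Finsupp.mem_span_image_iff_linearCombination ℝ).mp hx
  set a : ℕ → ℝ := fun i => (if i = 0 then 1 else 0) - l i with ha
  set m := l.support.sup id + 1 with hm
  have hsub : l.support ⊆ Finset.range m := fun i hi =>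
    Finset.mem_range.mpr (Nat.lt_succ_of_le (Finset.le_sup (f := id) hi))
  have hl0 : l 0 = 0 := by
    by_contra h
    exact hA (hl (Finsupp.mem_support_iff.mpr h))
  have hxeq : ∑ i ∈ Finset.range m, l i • e i = Finsupp.linearCombination ℝ e l := by
    rw [Finsupp.linearCombination_apply, Finsupp.sum]
    exact (Finset.sum_subset hsub (fun i _ hi => by
      rw [Finsupp.notMem_support_iff.mp hi, zero_smul])).symm
  have hfull : ∑ i ∈ Finset.range m, a i • e i
      = e 0 - Finsupp.linearCombination ℝ e l := by
    simp only [ha, sub_smul, Finset.sum_sub_distrib, hxeq]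
    congr 1
    rw [Finset.sum_eq_single 0]
    · simp
    · intro i _ hi; simp [hi]
    · intro h; exact absurd (Finset.mem_range.mpr (Nat.succ_pos _)) h
  have h1 : ∑ i ∈ Finset.range 1, a i • e i = e 0 := by
    simp [ha, hl0]
  have := hK a 1 m (Nat.one_le_iff_ne_zero.mpr (Nat.succ_ne_zero _))
  rwa [h1, hfull] at this

/-- If `0 ∉ A` then `e 0` is not in the closed span. -/
lemma IsBasicSeq.zero_not_mem {e : ℕ → X} (he : IsBasicSeq e)
    {A : Set ℕ} (hA : 0 ∉ A) : e 0 ∉ closedSpan e A := by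
  obtain ⟨hne, K, hK1, hK⟩ := he
  intro hmem
  have hK0 : 0 < K := lt_of_lt_of_le one_pos hK1
  have hpos : 0 < ‖e 0‖ := norm_pos_iff.mpr (hne 0)
  have hclo : e 0 ∈ closure (Submodule.span ℝ (e '' A) : Set X) := hmem
  rw [Metric.mem_closure_iff] at hclo
  obtain ⟨x, hx, hdist⟩ := hclo (‖e 0‖ / (2 * K)) (by positivity)
  have hb := IsBasicSeq.norm_le hne hK1 hK hA hx
  rw [dist_eq_norm] at hdist
  have : ‖e 0‖ < K * (‖e 0‖ / (2 * K)) :=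
    lt_of_le_of_lt hb (by exact mul_lt_mul_of_pos_left hdist hK0)
  rw [mul_div_assoc'] at this
  have heq : K * ‖e 0‖ / (2 * K) = ‖e 0‖ / 2 := by
    field_simp
  rw [heq] at this
  linarith
/-- infinite index set gives infinite-dimensional closed span -/
lemma IsBasicSeq.not_finiteDimensional {e : ℕ → X} (he : IsBasicSeq e)
    {A : Set ℕ} (hA : A.Infinite) : ¬ FiniteDimensional ℝ (closedSpan e A) := by
  intro hfd
  have hli := he.linearIndependent
  set g : ℕ ↪ A := hA.natEmbedding _
  have hmem : ∀ k : ℕ, e (g k) ∈ closedSpan e A := fun k =>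
    Submodule.le_topologicalClosure _
      (Submodule.subset_span (Set.mem_image_of_mem e (g k).2))
  set f : ℕ → closedSpan e A := fun k => ⟨e (g k), hmem k⟩ with hf
  have hlif : LinearIndependent ℝ f := by
    have hcomp : LinearIndependent ℝ (fun k : ℕ => e (g k)) :=
      hli.comp (fun k => (g k : ℕ)) (fun a b hab => g.injective (Subtype.ext hab))
    exact hcomp.of_comp (closedSpan e A).subtype
  exact Module.Finite.not_linearIndependent_of_infinite f hlif

/-- The flip-coordinate-0 homeomorphism of Cantor space. -/
def flip0 : (ℕ → Bool) ≃ₜ (ℕ → Bool) where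
  toFun B := fun n => if n = 0 then !B n else B n
  invFun B := fun n => if n = 0 then !B n else B n
  left_inv B := by funext n; by_cases h : n = 0 <;> simp [h]
  right_inv B := by funext n; by_cases h : n = 0 <;> simp [h]
  continuous_toFun := by
    apply continuous_pi
    intro n
    by_cases h : n = 0
    · simp only [h, if_pos]
      exact (continuous_of_discreteTopology (f := Bool.not)).comp (continuous_apply 0)
    · simp only [h, if_neg]
      exact continuous_apply n
  continuous_invFun := by
    apply continuous_pi
    intro n
    by_cases h : n = 0
    · simp only [h, if_pos]
      exact (continuous_of_discreteTopology (f := Bool.not)).comp (continuous_apply 0)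
    · simp only [h, if_neg]
      exact continuous_apply n

lemma dense_open_ge (m : ℕ) :
    IsOpen {B : ℕ → Bool | ∃ n ≥ m, B n = true} ∧
      Dense {B : ℕ → Bool | ∃ n ≥ m, B n = true} := by
  constructor
  · have : {B : ℕ → Bool | ∃ n ≥ m, B n = true}
        = ⋃ n ∈ {n | n ≥ m}, {B : ℕ → Bool | B n = true} := by
      ext B; simp [Set.mem_setOf_eq]
    rw [this]
    refine isOpen_biUnion fun n _ => ?_
    have : {B : ℕ → Bool | B n = true} = (fun B : ℕ → Bool => B n) ⁻¹' {b | b = true} := rfl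
    rw [this]
    exact IsOpen.preimage (continuous_apply n) (isOpen_discrete _)
  · rw [dense_iff_inter_open]
    intro U hU ⟨x, hx⟩
    obtain ⟨I, u, hIu, hsub⟩ := isOpen_pi_iff.mp hU x hx
    set n := I.sup id + m + 1 with hn
    have hnI : n ∉ I := by
      intro h
      have := Finset.le_sup (f := id) h
      simp only [id] at this
      omega
    set y : ℕ → Bool := fun k => if k ∈ I then x k else true with hy
    refine ⟨y, hsub ?_, n, by omega, ?_⟩
    · intro i hi
      show (if i ∈ I then x i else true) ∈ u i
      rw [if_pos (Finset.mem_coe.mp hi)]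
      exact (hIu i (Finset.mem_coe.mp hi)).2
    · simp [hy, hnI]

lemma infinite_support_residual :
    {B : ℕ → Bool | {n | B n = true}.Infinite} ∈ residual (ℕ → Bool) := by
  have h : ∀ m : ℕ, {B : ℕ → Bool | ∃ n ≥ m, B n = true} ∈ residual (ℕ → Bool) :=
    fun m => residual_of_dense_open (dense_open_ge m).1 (dense_open_ge m).2
  have hint : (⋂ m, {B : ℕ → Bool | ∃ n ≥ m, B n = true}) ∈ residual (ℕ → Bool) :=
    countable_iInter_mem.mpr h
  refine Filter.mem_of_superset hint ?_
  intro B hB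
  simp only [Set.mem_iInter, Set.mem_setOf_eq] at hB
  simp only [Set.mem_setOf_eq]
  intro hfin
  obtain ⟨b, hb⟩ := hfin.bddAbove
  obtain ⟨n, hn, hBn⟩ := hB (b + 1)
  have := hb (Set.mem_setOf_eq ▸ hBn : n ∈ {n | B n = true})
  omega

/-- `X` is hereditarily indecomposable: no closed infinite-dimensional subspace is
the direct sum of two closed infinite-dimensional subspaces. -/
def IsHI (X : Type*) [NormedAddCommGroup X] [NormedSpace ℝ X] : Prop :=
  ∀ Y : Submodule ℝ X, IsClosed (Y : Set X) → ¬ FiniteDimensional ℝ Y →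
    ¬ ∃ Z W : Submodule ℝ X, IsClosed (Z : Set X) ∧ IsClosed (W : Set X) ∧
        ¬ FiniteDimensional ℝ Z ∧ ¬ FiniteDimensional ℝ W ∧
        Z ⊓ W = ⊥ ∧ Z ⊔ W = Y

/-- in a hereditarily indecomposable Banach space in which no closed
infinite-dimensional subspace is isomorphic to a proper closed infinite-dimensional
subspace of itself, for any basic sequence `e` the isomorphism relation on the
spaces `[e_i]_{i ∈ A}`, viewed on Cantor space, has no comeager class. -/
theorem HI_no_comeager_isomorphism_class
    [CompleteSpace X] (hHI : IsHI X)
    (hnoproper : ∀ Y Z : Submodule ℝ X,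
      IsClosed (Y : Set X) → IsClosed (Z : Set X) →
      ¬ FiniteDimensional ℝ Y → ¬ FiniteDimensional ℝ Z →
      Z < Y → ¬ Nonempty (Y ≃L[ℝ] Z))
    (e : ℕ → X) (he : IsBasicSeq e) :
    ∀ C : ℕ → Bool,
      ¬ ({B : ℕ → Bool |
            Nonempty (closedSpan e {n | B n = true} ≃L[ℝ]
              closedSpan e {n | C n = true})} ∈ residual (ℕ → Bool)) := by
  intro C hmem
  set S := {B : ℕ → Bool |
      Nonempty (closedSpan e {n | B n = true} ≃L[ℝ]
        closedSpan e {n | C n = true})} with hS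
  have hmem2 : flip0 ⁻¹' S ∈ residual (ℕ → Bool) := by
    rw [← flip0.residual_map_eq] at hmem
    exact hmem
  have hres : S ∩ (flip0 ⁻¹' S) ∩ {B : ℕ → Bool | {n | B n = true}.Infinite}
      ∈ residual (ℕ → Bool) :=
    Filter.inter_mem (Filter.inter_mem hmem hmem2) infinite_support_residual
  have hdense := dense_of_mem_residual hres
  have hopen : IsOpen {B : ℕ → Bool | B 0 = false} := by
    have : {B : ℕ → Bool | B 0 = false}
        = (fun B : ℕ → Bool => B 0) ⁻¹' {b | b = false} := rfl
    rw [this]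
    exact IsOpen.preimage (continuous_apply 0) (isOpen_discrete _)
  obtain ⟨B, hBU, hBS⟩ := dense_iff_inter_open.mp hdense _ hopen
    ⟨fun _ => false, rfl⟩
  obtain ⟨⟨hB1, hB2⟩, hBinf⟩ := hBS
  have hB0 : B 0 = false := hBU
  set A := {n | B n = true} with hA
  have hA0 : 0 ∉ A := by simp [hA, hB0]
  have hAinf : A.Infinite := hBinf
  have hflipset : {n | flip0 B n = true} = insert 0 A := by
    ext n
    by_cases h : n = 0
    · subst h; simp [flip0, hB0]
    · simp [flip0, h, hA]
  obtain ⟨iso1⟩ : Nonempty (closedSpan e A ≃L[ℝ]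
      closedSpan e {n | C n = true}) := hB1
  have hB2' : flip0 B ∈ S := hB2
  rw [hS, Set.mem_setOf_eq, hflipset] at hB2'
  obtain ⟨iso2⟩ := hB2'
  have hle : closedSpan e A ≤ closedSpan e (insert 0 A) :=
    Submodule.topologicalClosure_mono
      (Submodule.span_mono (Set.image_mono (Set.subset_insert 0 A)))
  have hmem0 : e 0 ∈ closedSpan e (insert 0 A) :=
    Submodule.le_topologicalClosure _
      (Submodule.subset_span (Set.mem_image_of_mem e (Set.mem_insert 0 A)))
  have hlt : closedSpan e A < closedSpan e (insert 0 A) :=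
    lt_of_le_of_ne hle (fun h => he.zero_not_mem hA0 (h ▸ hmem0))
  exact hnoproper (closedSpan e (insert 0 A)) (closedSpan e A)
    (Submodule.isClosed_topologicalClosure _) (Submodule.isClosed_topologicalClosure _)
    (he.not_finiteDimensional (hAinf.mono (Set.subset_insert 0 A)))
    (he.not_finiteDimensional hAinf) hlt ⟨iso2.trans iso1.symm⟩
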